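/- arXiv:2512.20005 — 2 statements merged into one kernel-verified Lean document; each statement's English description precedes it below -/
import Mathlib

section
/- Let Λ be an N×r real matrix with Λᵀ Λ invertible, let σ² > 0 be a real number, and let u ∈ ℝᴺ. Then σ²·I_N + Λ Λᵀ and σ²·I_r + Λᵀ Λ are invertible, and uᵀ (σ²·I_N + Λ Λᵀ)⁻¹ u = σ⁻²·‖M_Λ u‖² + uᵀ Λ (σ²·I_r + Λᵀ Λ)⁻¹ (Λᵀ Λ)⁻¹ Λᵀ u. -/
/-!
Writing `M = 1 - Λ (ΛᵀΛ)⁻¹ Λᵀ` for the residual projection, the identities `Λᵀ M = 0` and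
`(σ²I + ΛΛᵀ) Λ = Λ (σ²I + ΛᵀΛ)` show that `σ⁻² M + Λ (σ²I + ΛᵀΛ)⁻¹ (ΛᵀΛ)⁻¹ Λᵀ` is a right
inverse of `σ²I + ΛΛᵀ`. Since `M` is symmetric and idempotent, `uᵀ M u = ‖M u‖²`.
-/

open Matrix

namespace Matrix

theorem posDef_smul_one_add {n R : Type*} [DecidableEq n] [CommRing R] [PartialOrder R]
    [StarRing R] [StarOrderedRing R] [NoZeroDivisors R] [PosMulStrictMono R] {σ : R}
    (hσ : 0 < σ) {A : Matrix n n R} (hA : A.PosSemidef) : (σ • (1 : Matrix n n R) + A).PosDef :=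
  (PosDef.one.smul hσ).add_posSemidef hA

variable {m n K : Type*} [Fintype m] [Fintype n] [DecidableEq m] [DecidableEq n]

section CommRing

variable [CommRing K]

/-- The paper's `M_A`. -/
noncomputable def residualProj (A : Matrix m n K) : Matrix m m K :=
  1 - A * (Aᵀ * A)⁻¹ * Aᵀ

variable {A : Matrix m n K}

theorem residualProj_mul (hA : IsUnit (Aᵀ * A)) : residualProj A * A = 0 := by
  rw [residualProj, Matrix.sub_mul, Matrix.one_mul, Matrix.mul_assoc (A * _) Aᵀ,
    nonsing_inv_mul_cancel_right _ _ ((isUnit_iff_isUnit_det _).mp hA), sub_self]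

theorem transpose_mul_residualProj (hA : IsUnit (Aᵀ * A)) : Aᵀ * residualProj A = 0 := by
  rw [residualProj, Matrix.mul_sub, Matrix.mul_one, ← Matrix.mul_assoc, ← Matrix.mul_assoc,
    mul_nonsing_inv _ ((isUnit_iff_isUnit_det _).mp hA), Matrix.one_mul, sub_self]

theorem transpose_residualProj (A : Matrix m n K) : (residualProj A)ᵀ = residualProj A := by
  simp only [residualProj, transpose_sub, transpose_one, transpose_mul, transpose_transpose,
    transpose_nonsing_inv, Matrix.mul_assoc]

theorem residualProj_mul_self (hA : IsUnit (Aᵀ * A)) :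
    residualProj A * residualProj A = residualProj A := by
  nth_rw 2 [residualProj]
  rw [Matrix.mul_sub, Matrix.mul_one, ← Matrix.mul_assoc, ← Matrix.mul_assoc,
    residualProj_mul hA, Matrix.zero_mul, Matrix.zero_mul, sub_zero]

theorem mulVec_residualProj_dotProduct_self (hA : IsUnit (Aᵀ * A)) (u : m → K) :
    residualProj A *ᵥ u ⬝ᵥ residualProj A *ᵥ u = u ⬝ᵥ residualProj A *ᵥ u := by
  rw [dotProduct_mulVec, ← mulVec_transpose, mulVec_mulVec, transpose_residualProj,
    residualProj_mul_self hA, dotProduct_comm]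

end CommRing

theorem inv_smul_one_add_mul_transpose [Field K] {A : Matrix m n K} (hA : IsUnit (Aᵀ * A))
    {σ : K} (hσ : σ ≠ 0) (hS : IsUnit (σ • (1 : Matrix n n K) + Aᵀ * A)) :
    (σ • (1 : Matrix m m K) + A * Aᵀ)⁻¹ =
      σ⁻¹ • residualProj A + A * (σ • 1 + Aᵀ * A)⁻¹ * (Aᵀ * A)⁻¹ * Aᵀ := by
  set S := σ • (1 : Matrix n n K) + Aᵀ * A
  refine inv_eq_right_inv ?_
  have h_intertwine : (σ • (1 : Matrix m m K) + A * Aᵀ) * A = A * S := by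
    simp only [S, Matrix.add_mul, Matrix.mul_add, Matrix.smul_mul, Matrix.mul_smul,
      Matrix.one_mul, Matrix.mul_one, Matrix.mul_assoc]
  have h_residual : (σ • (1 : Matrix m m K) + A * Aᵀ) * (σ⁻¹ • residualProj A)
      = residualProj A := by
    rw [Matrix.mul_smul, Matrix.add_mul, Matrix.smul_mul, Matrix.one_mul, Matrix.mul_assoc,
      transpose_mul_residualProj hA, Matrix.mul_zero, add_zero, smul_smul, inv_mul_cancel₀ hσ,
      one_smul]
  have h_column : (σ • (1 : Matrix m m K) + A * Aᵀ) * (A * S⁻¹ * (Aᵀ * A)⁻¹ * Aᵀ)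
      = A * (Aᵀ * A)⁻¹ * Aᵀ := by
    simp only [← Matrix.mul_assoc, h_intertwine]
    rw [mul_nonsing_inv_cancel_right _ _ ((isUnit_iff_isUnit_det _).mp hS)]
  rw [Matrix.mul_add, h_residual, h_column, residualProj, sub_add_cancel]

end Matrix

/-- Quadratic-form splitting (B.5)-(B.6):
`uᵀ (σ²I_N + ΛΛᵀ)⁻¹ u = σ⁻²‖M_Λ u‖² + uᵀ Λ (σ²I_r + ΛᵀΛ)⁻¹ (ΛᵀΛ)⁻¹ Λᵀ u`. -/
theorem stmt13 (N r : ℕ) (Λ : Matrix (Fin N) (Fin r) ℝ) (hΛ : IsUnit (Λᵀ * Λ))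
    (σ2 : ℝ) (hσ2 : 0 < σ2) (u : Fin N → ℝ) :
    let MΛ := (1 : Matrix (Fin N) (Fin N) ℝ) - Λ * (Λᵀ * Λ)⁻¹ * Λᵀ
    IsUnit (σ2 • (1 : Matrix (Fin N) (Fin N) ℝ) + Λ * Λᵀ) ∧
    IsUnit (σ2 • (1 : Matrix (Fin r) (Fin r) ℝ) + Λᵀ * Λ) ∧
    u ⬝ᵥ ((σ2 • (1 : Matrix (Fin N) (Fin N) ℝ) + Λ * Λᵀ)⁻¹ *ᵥ u) =
      σ2⁻¹ * ((MΛ *ᵥ u) ⬝ᵥ (MΛ *ᵥ u))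
        + u ⬝ᵥ ((Λ * (σ2 • (1 : Matrix (Fin r) (Fin r) ℝ) + Λᵀ * Λ)⁻¹ *
            (Λᵀ * Λ)⁻¹ * Λᵀ) *ᵥ u) := by
  have hB := (posDef_smul_one_add hσ2 (by simpa using posSemidef_self_mul_conjTranspose Λ)).isUnit
  have hS := (posDef_smul_one_add hσ2 (by simpa using posSemidef_conjTranspose_mul_self Λ)).isUnit
  refine ⟨hB, hS, ?_⟩
  change _ = σ2⁻¹ * (residualProj Λ *ᵥ u ⬝ᵥ residualProj Λ *ᵥ u) + _
  rw [inv_smul_one_add_mul_transpose hΛ hσ2.ne' hS, mulVec_residualProj_dotProduct_self hΛ,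
    add_mulVec, dotProduct_add, smul_mulVec, dotProduct_smul, smul_eq_mul]
end

section
/- Let σ² > 0 be a real number, let R be a p×k₁ real matrix, C a q×k₂ real matrix, Λ := C ⊗ R (so Λ is (pq)×r with r = k₁k₂), let V be a symmetric positive definite r×r real matrix, and set V_upd := (I_r + σ⁻²·V Λᵀ Λ)⁻¹ V. Let Y be a p×q real matrix and F a k₁×k₂ real matrix, and write y := vec(Y), f := vec(F). Then (y − Λ f)ᵀ (σ²·I_{pq} + Λ V Λᵀ)⁻¹ (y − Λ f) = A₁ − A₂ + A₃ − B₁ + B₂ − B₃, where A₁ = σ⁻²·Tr(Yᵀ Y), A₂ = 2σ⁻²·Tr(Yᵀ R F Cᵀ), A₃ = σ⁻²·Tr(C Fᵀ Rᵀ R F Cᵀ), B₁ = σ⁻⁴·vec(Rᵀ Y C)ᵀ V_upd vec(Rᵀ Y C), B₂ = 2σ⁻⁴·vec(Rᵀ Y C)ᵀ V_upd Λᵀ Λ f, and B₃ = σ⁻⁴·fᵀ Λᵀ Λ V_upd Λᵀ Λ f. -/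
/-!
The precision form `(V⁻¹ + σ⁻² ΛᵀΛ)⁻¹` of `V_upd` turns the Woodbury identity into
`(σ² I + Λ V Λᵀ)⁻¹ = σ⁻² I - σ⁻⁴ Λ V_upd Λᵀ`, so the quadratic form in `η = y - Λ f` splits into
`σ⁻² ηᵀη - σ⁻⁴ (Λᵀη)ᵀ V_upd (Λᵀη)`. Both pieces are expanded as squares of differences of
symmetric forms, and the Kronecker structure `(C ⊗ R) vec F = vec (R F Cᵀ)` turns `Λ f` and
`Λᵀ y` into `vec (R F Cᵀ)` and `vec (Rᵀ Y C)`, and `ηᵀη` into traces.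
-/

open Matrix Kronecker

namespace Matrix

section Symmetric

variable {R n : Type*} [CommRing R] [Fintype n]

theorem IsSymm.dotProduct_mulVec_comm {S : Matrix n n R} (hS : S.IsSymm) (a b : n → R) :
    a ⬝ᵥ (S *ᵥ b) = b ⬝ᵥ (S *ᵥ a) := by
  simpa only [hS.eq] using dotProduct_transpose_mulVec S a b

theorem IsSymm.sub_dotProduct_mulVec_sub {S : Matrix n n R} (hS : S.IsSymm) (a b : n → R) :
    (a - b) ⬝ᵥ (S *ᵥ (a - b)) = a ⬝ᵥ (S *ᵥ a) - 2 * (a ⬝ᵥ (S *ᵥ b)) + b ⬝ᵥ (S *ᵥ b) := by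
  rw [mulVec_sub, sub_dotProduct, dotProduct_sub, dotProduct_sub, hS.dotProduct_mulVec_comm b a]
  ring

theorem IsSymm.sub_mulVec_dotProduct_mulVec_sub {W G : Matrix n n R} (hW : W.IsSymm)
    (hG : G.IsSymm) (a f : n → R) :
    (a - G *ᵥ f) ⬝ᵥ (W *ᵥ (a - G *ᵥ f)) =
      a ⬝ᵥ (W *ᵥ a) - 2 * (a ⬝ᵥ ((W * G) *ᵥ f)) + f ⬝ᵥ ((G * W * G) *ᵥ f) := by
  simp only [hW.sub_dotProduct_mulVec_sub, ← mulVec_mulVec]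
  rw [hG.dotProduct_mulVec_comm f, dotProduct_comm (W *ᵥ G *ᵥ f)]

theorem vec_sub_dotProduct_vec_sub {m : Type*} [Fintype m] (A B : Matrix m n R) :
    (vec A - vec B) ⬝ᵥ (vec A - vec B) = trace (Aᵀ * A) - 2 * trace (Aᵀ * B) + trace (Bᵀ * B) := by
  have hBA : trace (Bᵀ * A) = trace (Aᵀ * B) := by
    rw [← trace_transpose, transpose_mul, transpose_transpose]
  rw [← vec_sub, vec_dotProduct_vec, transpose_sub, Matrix.sub_mul, Matrix.mul_sub,
    Matrix.mul_sub, trace_sub, trace_sub, trace_sub, hBA]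
  ring

end Symmetric

theorem kronecker_transpose_mulVec_vec {R l m n p : Type*} [CommSemiring R] [Fintype l]
    [Fintype p] (A : Matrix l m R) (X : Matrix l p R) (B : Matrix p n R) :
    (B ⊗ₖ A)ᵀ *ᵥ vec X = vec (Aᵀ * X * B) := by
  rw [← kroneckerMap_transpose, kronecker_mulVec_vec, transpose_transpose]

section Woodbury

variable {K n m : Type*} [Field K] [Fintype n] [DecidableEq n] [Fintype m] [DecidableEq m]

theorem inv_one_add_smul_mul_mul_eq_inv_add {V : Matrix m m K} (hV : IsUnit V) (M : Matrix m m K) (s : K) :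
    (1 + s • (V * M))⁻¹ * V = (V⁻¹ + s • M)⁻¹ := by
  have hV' := (isUnit_iff_isUnit_det V).mp hV
  rw [show 1 + s • (V * M) = V * (V⁻¹ + s • M) by
    rw [Matrix.mul_add, mul_nonsing_inv V hV', mul_smul_comm], mul_inv_rev,
    nonsing_inv_mul_cancel_right _ _ hV']

theorem inv_smul_one_add_mul_mul_transpose {σ : K} (hσ : σ ≠ 0) (Λ : Matrix n m K)
    {V : Matrix m m K} (hV : IsUnit V) (hP : IsUnit (V⁻¹ + σ⁻¹ • (Λᵀ * Λ))) :
    (σ • (1 : Matrix n n K) + Λ * V * Λᵀ)⁻¹ =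
      σ⁻¹ • 1 - σ⁻¹ ^ 2 • (Λ * (V⁻¹ + σ⁻¹ • (Λᵀ * Λ))⁻¹ * Λᵀ) := by
  have hmul : σ • (1 : Matrix n n K) * σ⁻¹ • 1 = 1 := by
    rw [smul_mul_smul_comm, mul_inv_cancel₀ hσ, one_mul, one_smul]
  have hA : (σ • (1 : Matrix n n K))⁻¹ = σ⁻¹ • 1 := inv_eq_right_inv hmul
  have hP' : V⁻¹ + Λᵀ * (σ • (1 : Matrix n n K))⁻¹ * Λ = V⁻¹ + σ⁻¹ • (Λᵀ * Λ) := by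
    rw [hA, Matrix.mul_smul, Matrix.mul_one, Matrix.smul_mul]
  rw [add_mul_mul_inv_eq_sub _ _ _ _ ((isUnit_iff_isUnit_det _).mpr (by simp [hσ])) hV
    (hP' ▸ hP), hP', hA]
  simp only [Matrix.smul_mul, Matrix.mul_smul, Matrix.one_mul, Matrix.mul_one, smul_smul, sq]

theorem dotProduct_inv_smul_one_add_mul_mul_transpose_mulVec {σ : K} (hσ : σ ≠ 0)
    (Λ : Matrix n m K) {V : Matrix m m K} (hV : IsUnit V)
    (hP : IsUnit (V⁻¹ + σ⁻¹ • (Λᵀ * Λ))) (η : n → K) :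
    η ⬝ᵥ ((σ • (1 : Matrix n n K) + Λ * V * Λᵀ)⁻¹ *ᵥ η) =
      σ⁻¹ * (η ⬝ᵥ η) -
        σ⁻¹ ^ 2 * ((Λᵀ *ᵥ η) ⬝ᵥ ((V⁻¹ + σ⁻¹ • (Λᵀ * Λ))⁻¹ *ᵥ (Λᵀ *ᵥ η))) := by
  rw [inv_smul_one_add_mul_mul_transpose hσ Λ hV hP, sub_mulVec, smul_mulVec, one_mulVec,
    smul_mulVec, dotProduct_sub, dotProduct_smul, dotProduct_smul, smul_eq_mul, smul_eq_mul,
    ← mulVec_mulVec, ← mulVec_mulVec, dotProduct_mulVec η Λ, ← mulVec_transpose]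

end Woodbury

end Matrix

/-- Quadratic-form decomposition of Lemma A.1: with `Λ = C ⊗ R`, `y = vec Y`, `f = vec F`,
`(y − Λf)ᵀ (σ²·I + Λ V Λᵀ)⁻¹ (y − Λf) = A₁ − A₂ + A₃ − B₁ + B₂ − B₃`. -/
theorem stmt17 (p q k₁ k₂ : ℕ) (σ2 : ℝ) (hσ2 : 0 < σ2)
    (R : Matrix (Fin p) (Fin k₁) ℝ) (C : Matrix (Fin q) (Fin k₂) ℝ)
    (V : Matrix (Fin k₂ × Fin k₁) (Fin k₂ × Fin k₁) ℝ) (hV : V.PosDef)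
    (Y : Matrix (Fin p) (Fin q) ℝ) (F : Matrix (Fin k₁) (Fin k₂) ℝ) :
    let Λ := C ⊗ₖ R
    let Vupd := ((1 : Matrix (Fin k₂ × Fin k₁) (Fin k₂ × Fin k₁) ℝ) +
      σ2⁻¹ • (V * Λᵀ * Λ))⁻¹ * V
    let y : Fin q × Fin p → ℝ := fun u => Y u.2 u.1
    let f : Fin k₂ × Fin k₁ → ℝ := fun u => F u.2 u.1
    let vRYC : Fin k₂ × Fin k₁ → ℝ := fun u => (Rᵀ * Y * C) u.2 u.1
    (y - Λ *ᵥ f) ⬝ᵥ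
        ((σ2 • (1 : Matrix (Fin q × Fin p) (Fin q × Fin p) ℝ) + Λ * V * Λᵀ)⁻¹ *ᵥ
          (y - Λ *ᵥ f)) =
      σ2⁻¹ * trace (Yᵀ * Y)
      - 2 * σ2⁻¹ * trace (Yᵀ * R * F * Cᵀ)
      + σ2⁻¹ * trace (C * Fᵀ * Rᵀ * R * F * Cᵀ)
      - σ2⁻¹ ^ 2 * (vRYC ⬝ᵥ (Vupd *ᵥ vRYC))
      + 2 * σ2⁻¹ ^ 2 * (vRYC ⬝ᵥ ((Vupd * Λᵀ * Λ) *ᵥ f))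
      - σ2⁻¹ ^ 2 * (f ⬝ᵥ ((Λᵀ * Λ * Vupd * Λᵀ * Λ) *ᵥ f)) := by
  intro Λ Vupd y f vRYC
  set P := V⁻¹ + σ2⁻¹ • (Λᵀ * Λ)
  have hP : P.PosDef := hV.inv.add_posSemidef <| by
    simpa using (posSemidef_conjTranspose_mul_self Λ).smul (inv_pos.2 hσ2).le
  have hVupd : Vupd = P⁻¹ := by
    change (1 + σ2⁻¹ • (V * Λᵀ * Λ))⁻¹ * V = P⁻¹
    rw [Matrix.mul_assoc, inv_one_add_smul_mul_mul_eq_inv_add hV.isUnit]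
  have hf : Λ *ᵥ f = vec (R * F * Cᵀ) := kronecker_mulVec_vec R F C
  have hresidual : (y - Λ *ᵥ f) ⬝ᵥ (y - Λ *ᵥ f) = trace (Yᵀ * Y)
      - 2 * trace (Yᵀ * R * F * Cᵀ) + trace (C * Fᵀ * Rᵀ * R * F * Cᵀ) := by
    rw [hf]
    refine (vec_sub_dotProduct_vec_sub Y (R * F * Cᵀ)).trans ?_
    simp only [transpose_mul, transpose_transpose, Matrix.mul_assoc]
  have hprojected : Λᵀ *ᵥ (y - Λ *ᵥ f) = vRYC - (Λᵀ * Λ) *ᵥ f := by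
    rw [mulVec_sub, mulVec_mulVec]
    exact congrArg (· - _) (kronecker_transpose_mulVec_vec R Y C)
  have hupdated : (Λᵀ *ᵥ (y - Λ *ᵥ f)) ⬝ᵥ (P⁻¹ *ᵥ (Λᵀ *ᵥ (y - Λ *ᵥ f))) =
      vRYC ⬝ᵥ (Vupd *ᵥ vRYC) - 2 * (vRYC ⬝ᵥ ((Vupd * Λᵀ * Λ) *ᵥ f))
        + f ⬝ᵥ ((Λᵀ * Λ * Vupd * Λᵀ * Λ) *ᵥ f) := by
    have hGram : (Λᵀ * Λ).IsSymm := transpose_mul _ _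
    rw [hprojected, (isHermitian_iff_isSymm.mp hP.isHermitian).inv.sub_mulVec_dotProduct_mulVec_sub
      hGram, ← hVupd]
    simp only [Matrix.mul_assoc]
  rw [dotProduct_inv_smul_one_add_mul_mul_transpose_mulVec hσ2.ne' Λ hV.isUnit hP.isUnit,
    hresidual, hupdated]
  ring
end
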